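/- arXiv:2503.13990 — 3 statements merged into one kernel-verified Lean document; each statement's English description precedes it below -/
import Mathlib

section
/- Let ψ: ℝⁿ → ℝ be η-weakly convex with η > 0 and μ ∈ (0, η⁻¹). Then ∇(μψ) is Lipschitz continuous with Lipschitz constant max{μ⁻¹, η/(1 − ημ)}. -/
/-!
The prox objective `w ↦ ψ w + ‖w - z‖² / (2μ)` is `(μ⁻¹ - η)`-strongly convex, so it grows
quadratically away from its minimiser `prox z`. Adding these growth inequalities at two centres `z`, `w`
gives `(1 - ημ)‖prox z - prox w‖² ≤ ⟪prox z - prox w, z - w⟫`, from which the map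
`v z = μ⁻¹ (z - prox z)` is Lipschitz with constant `max μ⁻¹ (η / (1 - ημ))`. Comparing the envelope at `y`
with the objective at the competitor `prox z` bounds it above by its first-order expansion at `z` plus
`‖y - z‖² / (2μ)`; together with the Lipschitz bound on `v` this pins down `v z` as the gradient.
-/

open Set Filter Topology RealInnerProductSpace NNReal

section NormedSpace

variable {E : Type*} [NormedAddCommGroup E] [NormedSpace ℝ E]

lemma StrongConvexOn.add_sq_le_of_isMinOn {f : E → ℝ} {m : ℝ} {p : E}
    (hf : StrongConvexOn univ m f) (hp : IsMinOn f univ p) (w : E) :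
    f p + m / 2 * ‖w - p‖ ^ 2 ≤ f w := by
  have hsegment : ∀ t ∈ Ioo (0 : ℝ) 1, f p + (1 - t) * (m / 2 * ‖w - p‖ ^ 2) ≤ f w := by
    rintro t ⟨ht0, ht1⟩
    have hconv := hf.2 (mem_univ p) (mem_univ w) (sub_nonneg.2 ht1.le) ht0.le (sub_add_cancel 1 t)
    have hmin : f p ≤ f ((1 - t) • p + t • w) := hp (mem_univ _)
    rw [norm_sub_rev] at hconv
    simp only [smul_eq_mul] at hconv
    nlinarith
  have hlim : Tendsto (fun t : ℝ => f p + (1 - t) * (m / 2 * ‖w - p‖ ^ 2)) (𝓝[>] 0)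
      (𝓝 (f p + (1 - 0) * (m / 2 * ‖w - p‖ ^ 2))) :=
    ((continuous_const.add ((continuous_const.sub continuous_id).mul continuous_const)).tendsto
      0).mono_left nhdsWithin_le_nhds
  refine le_of_tendsto (by simpa using hlim) ?_
  filter_upwards [Ioo_mem_nhdsGT one_pos] using hsegment

end NormedSpace

variable {E : Type*} [NormedAddCommGroup E] [InnerProductSpace ℝ E]

lemma norm_sub_le_max_mul_norm_of_mul_sq_le_inner {u q : E} {a : ℝ} (ha : 0 < a)
    (h : a * ‖q‖ ^ 2 ≤ ⟪q, u⟫) : ‖u - q‖ ≤ max 1 ((1 - a) / a) * ‖u‖ := by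
  have hsq : ‖u - q‖ ^ 2 ≤ ‖u‖ ^ 2 + (1 - 2 * a) * ‖q‖ ^ 2 := by
    rw [norm_sub_sq_real, real_inner_comm]; linarith
  refine (sq_le_sq₀ (norm_nonneg _) (by positivity)).1 (hsq.trans ?_)
  rw [mul_pow]
  rcases le_or_gt (1 / 2) a with ha2 | ha2
  · have hq : (1 - 2 * a) * ‖q‖ ^ 2 ≤ 0 :=
      mul_nonpos_of_nonpos_of_nonneg (by linarith) (sq_nonneg _)
    have hu : ‖u‖ ^ 2 ≤ max 1 ((1 - a) / a) ^ 2 * ‖u‖ ^ 2 :=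
      le_mul_of_one_le_left (sq_nonneg _) (one_le_pow₀ (le_max_left _ _))
    linarith
  · have hq : a * ‖q‖ ≤ ‖u‖ := by
      rcases (norm_nonneg q).eq_or_lt with hq0 | hq0
      · rw [← hq0, mul_zero]; exact norm_nonneg u
      · refine le_of_mul_le_mul_right ?_ hq0
        nlinarith [real_inner_le_norm q u]
    calc ‖u‖ ^ 2 + (1 - 2 * a) * ‖q‖ ^ 2
        = ‖u‖ ^ 2 + (1 - 2 * a) / a ^ 2 * (a * ‖q‖) ^ 2 := by field_simp
      _ ≤ ‖u‖ ^ 2 + (1 - 2 * a) / a ^ 2 * ‖u‖ ^ 2 := by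
        gcongr
        exact div_nonneg (by linarith) (sq_nonneg a)
      _ = ((1 - a) / a) ^ 2 * ‖u‖ ^ 2 := by field_simp; ring
      _ ≤ max 1 ((1 - a) / a) ^ 2 * ‖u‖ ^ 2 := by
        gcongr
        · exact div_nonneg (by linarith) ha.le
        · exact le_max_right _ _

lemma hasGradientAt_of_sub_sub_inner_le [CompleteSpace E] {f : E → ℝ} {v : E → E} {c : ℝ}
    {L : ℝ≥0} (hf : ∀ x y, f y - f x - ⟪v x, y - x⟫ ≤ c * ‖y - x‖ ^ 2) (hv : LipschitzWith L v)
    (x : E) : HasGradientAt f (v x) x := by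
  have hbound : ∀ y, |f y - f x - ⟪v x, y - x⟫| ≤ (c + L) * ‖y - x‖ ^ 2 := by
    intro y
    have hcross : -(L * ‖y - x‖ ^ 2) ≤ ⟪v y - v x, y - x⟫ := by
      have := (abs_real_inner_le_norm (v y - v x) (y - x)).trans
        (mul_le_mul_of_nonneg_right (hv.norm_sub_le y x) (norm_nonneg _))
      rw [abs_le] at this
      linarith
    have hyx := hf y x
    rw [norm_sub_rev, ← neg_sub y x, inner_neg_right] at hyx
    rw [inner_sub_left] at hcross
    rw [abs_le]
    constructor <;> nlinarith [hf x y, L.coe_nonneg, sq_nonneg ‖y - x‖]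
  rw [hasGradientAt_iff_isLittleO]
  refine (Asymptotics.IsBigO.of_bound (c + L) (Eventually.of_forall fun y => ?_)).trans_isLittleO
    ((Asymptotics.isLittleO_norm_pow_id one_lt_two).comp_tendsto
      (tendsto_sub_nhds_zero_iff.2 tendsto_id))
  simpa [Real.norm_eq_abs, abs_of_nonneg (sq_nonneg ‖y - x‖)] using hbound y

section Prox

variable {ψ : E → ℝ} {η μ : ℝ} {prox : E → E}

lemma strongConvexOn_add_mul_norm_sub_sq
    (hψ : ConvexOn ℝ univ (fun z => ψ z + (η / 2) * ‖z‖ ^ 2)) (μ : ℝ) (z : E) :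
    StrongConvexOn univ (μ⁻¹ - η) (fun w => ψ w + (1 / (2 * μ)) * ‖w - z‖ ^ 2) := by
  rw [strongConvexOn_iff_convex]
  refine ((hψ.add ((innerₛₗ ℝ (-μ⁻¹ • z)).convexOn convex_univ)).add_const
    (‖z‖ ^ 2 / (2 * μ))).congr fun w _ => ?_
  simp only [Pi.add_apply, innerₛₗ_apply_apply, norm_sub_sq_real, real_inner_smul_left,
    real_inner_comm z w]
  ring

lemma one_sub_mul_norm_prox_sub_sq_le_inner (hμ : 0 < μ)
    (hψ : ConvexOn ℝ univ (fun z => ψ z + (η / 2) * ‖z‖ ^ 2))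
    (hprox : ∀ z, IsMinOn (fun w => ψ w + (1 / (2 * μ)) * ‖w - z‖ ^ 2) univ (prox z)) (z w : E) :
    (1 - η * μ) * ‖prox z - prox w‖ ^ 2 ≤ ⟪prox z - prox w, z - w⟫ := by
  have hz := (strongConvexOn_add_mul_norm_sub_sq hψ μ z).add_sq_le_of_isMinOn (hprox z) (prox w)
  have hw := (strongConvexOn_add_mul_norm_sub_sq hψ μ w).add_sq_le_of_isMinOn (hprox w) (prox z)
  have hpolar : ‖prox w - z‖ ^ 2 + ‖prox z - w‖ ^ 2 - ‖prox z - z‖ ^ 2 - ‖prox w - w‖ ^ 2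
      = 2 * ⟪prox z - prox w, z - w⟫ := by
    simp only [norm_sub_sq_real, inner_sub_left, inner_sub_right, real_inner_comm]
    ring
  rw [norm_sub_rev (prox w)] at hz
  have hsum : (μ⁻¹ - η) * ‖prox z - prox w‖ ^ 2 ≤ μ⁻¹ * ⟪prox z - prox w, z - w⟫ := by
    linear_combination hz + hw + (1 / (2 * μ)) * hpolar
  calc (1 - η * μ) * ‖prox z - prox w‖ ^ 2 = μ * ((μ⁻¹ - η) * ‖prox z - prox w‖ ^ 2) := by
        field_simp
    _ ≤ μ * (μ⁻¹ * ⟪prox z - prox w, z - w⟫) := by gcongr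
    _ = ⟪prox z - prox w, z - w⟫ := by field_simp

lemma lipschitzWith_inv_smul_sub_prox (hμ : 0 < μ) (hημ : η * μ < 1)
    (hψ : ConvexOn ℝ univ (fun z => ψ z + (η / 2) * ‖z‖ ^ 2))
    (hprox : ∀ z, IsMinOn (fun w => ψ w + (1 / (2 * μ)) * ‖w - z‖ ^ 2) univ (prox z)) :
    LipschitzWith (max μ⁻¹ (η / (1 - η * μ))).toNNReal (fun z => μ⁻¹ • (z - prox z)) := by
  have hconst : μ⁻¹ * max 1 ((1 - (1 - η * μ)) / (1 - η * μ)) = max μ⁻¹ (η / (1 - η * μ)) := by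
    rw [mul_max_of_nonneg _ _ (inv_pos.2 hμ).le, mul_one, sub_sub_cancel]
    congr 1
    field_simp
  refine LipschitzWith.of_dist_le_mul fun z w => ?_
  rw [dist_eq_norm, dist_eq_norm, Real.coe_toNNReal _ ((inv_pos.2 hμ).le.trans (le_max_left _ _)),
    ← hconst, ← smul_sub, norm_smul, Real.norm_of_nonneg (inv_pos.2 hμ).le, mul_assoc,
    show z - prox z - (w - prox w) = (z - w) - (prox z - prox w) by abel]
  gcongr
  exact norm_sub_le_max_mul_norm_of_mul_sq_le_inner (sub_pos.2 hημ)
    (one_sub_mul_norm_prox_sub_sq_le_inner hμ hψ hprox z w)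

lemma moreau_sub_sub_inner_le {env : E → ℝ}
    (hprox : ∀ z, IsMinOn (fun w => ψ w + (1 / (2 * μ)) * ‖w - z‖ ^ 2) univ (prox z))
    (henv : ∀ z, env z = ψ (prox z) + (1 / (2 * μ)) * ‖prox z - z‖ ^ 2) (z y : E) :
    env y - env z - ⟪μ⁻¹ • (z - prox z), y - z⟫ ≤ 1 / (2 * μ) * ‖y - z‖ ^ 2 := by
  have hcompetitor : env y ≤ ψ (prox z) + 1 / (2 * μ) * ‖prox z - y‖ ^ 2 := by
    rw [henv y]; exact hprox y (mem_univ _)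
  have hexpand : ‖prox z - y‖ ^ 2
      = ‖prox z - z‖ ^ 2 + 2 * ⟪z - prox z, y - z⟫ + ‖y - z‖ ^ 2 := by
    rw [show prox z - y = (prox z - z) - (y - z) by abel, norm_sub_sq_real,
      ← neg_sub z (prox z), inner_neg_left]
    ring
  rw [henv z, real_inner_smul_left]
  rw [hexpand] at hcompetitor
  have : 1 / (2 * μ) * (2 * ⟪z - prox z, y - z⟫) = μ⁻¹ * ⟪z - prox z, y - z⟫ := by ring
  linarith

end Prox

theorem stmt3_general {n : ℕ} (ψ : EuclideanSpace ℝ (Fin n) → ℝ) (η μ : ℝ)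
    (hη : 0 < η) (hμ : μ ∈ Set.Ioo 0 η⁻¹)
    (hwc : ConvexOn ℝ Set.univ (fun z => ψ z + (η / 2) * ‖z‖ ^ 2))
    (prox : EuclideanSpace ℝ (Fin n) → EuclideanSpace ℝ (Fin n))
    (hprox : ∀ z, IsMinOn (fun w => ψ w + (1 / (2 * μ)) * ‖w - z‖ ^ 2) Set.univ (prox z))
    (env G : _) 
    (henv : ∀ z : EuclideanSpace ℝ (Fin n), env z = ψ (prox z) + (1 / (2 * μ)) * ‖prox z - z‖ ^ 2)
    (hG : ∀ z, HasGradientAt env (G z) z) :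
    LipschitzWith (Real.toNNReal (max μ⁻¹ (η / (1 - η * μ)))) G := by
  obtain ⟨hμ0, hμη⟩ := hμ
  have hημ : η * μ < 1 := (lt_inv_mul_iff₀ hη).1 (by rwa [mul_one])
  have hlip := lipschitzWith_inv_smul_sub_prox hμ0 hημ hwc hprox
  have hGv : G = fun z => μ⁻¹ • (z - prox z) := funext fun z =>
    (hG z).unique (hasGradientAt_of_sub_sub_inner_le (moreau_sub_sub_inner_le hprox henv) hlip z)
  rwa [hGv]

/-- ∇(μψ) is Lipschitz with constant max{μ⁻¹, η/(1 − ημ)}. -/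
theorem stmt3 {n : ℕ} (ψ : EuclideanSpace ℝ (Fin n) → ℝ) (η μ : ℝ)
    (hη : 0 < η) (hμ : μ ∈ Set.Ioo 0 η⁻¹)
    (hcont : Continuous ψ)
    (hwc : ConvexOn ℝ Set.univ (fun z => ψ z + (η / 2) * ‖z‖ ^ 2))
    (prox : EuclideanSpace ℝ (Fin n) → EuclideanSpace ℝ (Fin n))
    (hprox : ∀ z, IsMinOn (fun w => ψ w + (1 / (2 * μ)) * ‖w - z‖ ^ 2) Set.univ (prox z))
    (env G : _) 
    (henv : ∀ z : EuclideanSpace ℝ (Fin n), env z = ψ (prox z) + (1 / (2 * μ)) * ‖prox z - z‖ ^ 2)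
    (hG : ∀ z, HasGradientAt env (G z) z) :
    LipschitzWith (Real.toNNReal (max μ⁻¹ (η / (1 - η * μ)))) G :=
  stmt3_general ψ η μ hη hμ hwc prox hprox env G henv hG
end

section
/- Let ψ: ℝⁿ → ℝ be η-weakly convex and L-Lipschitz continuous, and μ ∈ (0, η⁻¹). Then for all z ∈ ℝⁿ, ‖z − prox_{μψ}(z)‖ ≤ μL/(1 − ημ); in particular ‖∇(μψ)(z)‖ ≤ L/(1 − ημ). -/
/-!
The proximal step moves `z` by at most `μ L`. If `p` minimizes
`ψ w + ‖w - z‖² / (2μ)`, compare with `w = p + t (z - p)`: the quadratic term drops by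
`t (2 - t) ‖z - p‖² / (2μ)` while `ψ` rises by at most `L t ‖z - p‖`; dividing by `t` and letting
`t → 0⁺` gives `‖z - p‖ ≤ μ L`. Since `0 < 1 - ημ ≤ 1`, this is at most `μ L / (1 - ημ)`.
-/

open Set Filter Topology NNReal

section ProxDisplacement

variable {E : Type*} [NormedAddCommGroup E] [NormedSpace ℝ E] {ψ : E → ℝ} {K : ℝ≥0} {μ : ℝ}
  {z p : E}

theorem two_sub_mul_sq_norm_sub_le_of_isMinOn (hψ : LipschitzWith K ψ) (hμ : 0 < μ)
    (hp : IsMinOn (fun w => ψ w + (1 / (2 * μ)) * ‖w - z‖ ^ 2) univ p)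
    {t : ℝ} (ht₀ : 0 < t) (ht₁ : t ≤ 1) :
    (2 - t) * ‖z - p‖ ^ 2 ≤ 2 * μ * K * ‖z - p‖ := by
  set w := p + t • (z - p)
  have hwp : ‖w - p‖ = t * ‖z - p‖ := by
    rw [add_sub_cancel_left, norm_smul, Real.norm_of_nonneg ht₀.le]
  have hwz : ‖w - z‖ = (1 - t) * ‖z - p‖ := by
    rw [show w - z = (1 - t) • (p - z) by module, norm_smul,
      Real.norm_of_nonneg (by linarith), norm_sub_rev]
  have hmin : ψ p + (1 / (2 * μ)) * ‖z - p‖ ^ 2 ≤ ψ w + (1 / (2 * μ)) * ‖w - z‖ ^ 2 := by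
    simpa [norm_sub_rev p z] using isMinOn_iff.mp hp w (mem_univ w)
  have hlip : ψ w - ψ p ≤ K * (t * ‖z - p‖) := by
    rw [← hwp, ← dist_eq_norm]
    exact (le_abs_self _).trans (by simpa [Real.dist_eq] using hψ.dist_le_mul w p)
  rw [hwz] at hmin
  have hgain : (1 / (2 * μ)) * (‖z - p‖ ^ 2 - ((1 - t) * ‖z - p‖) ^ 2) ≤ K * (t * ‖z - p‖) := by
    linarith
  rw [one_div, inv_mul_le_iff₀ (by positivity)] at hgain
  have hdec : t * ((2 - t) * ‖z - p‖ ^ 2) ≤ t * (2 * μ * K * ‖z - p‖) :=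
    calc t * ((2 - t) * ‖z - p‖ ^ 2) = ‖z - p‖ ^ 2 - ((1 - t) * ‖z - p‖) ^ 2 := by ring
      _ ≤ 2 * μ * (K * (t * ‖z - p‖)) := hgain
      _ = t * (2 * μ * K * ‖z - p‖) := by ring
  exact le_of_mul_le_mul_left hdec ht₀

theorem norm_sub_le_mul_of_isMinOn (hψ : LipschitzWith K ψ) (hμ : 0 < μ)
    (hp : IsMinOn (fun w => ψ w + (1 / (2 * μ)) * ‖w - z‖ ^ 2) univ p) :
    ‖z - p‖ ≤ μ * K := by
  have hlim : Tendsto (fun t : ℝ => (2 - t) * ‖z - p‖ ^ 2) (𝓝[>] 0) (𝓝 (2 * ‖z - p‖ ^ 2)) := by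
    have : Continuous fun t : ℝ => (2 - t) * ‖z - p‖ ^ 2 := by fun_prop
    simpa using this.continuousWithinAt.tendsto (x := 0) (s := Ioi 0)
  have hsq : 2 * ‖z - p‖ ^ 2 ≤ 2 * μ * K * ‖z - p‖ :=
    le_of_tendsto hlim <| eventually_of_mem (Ioc_mem_nhdsGT one_pos) fun t ht =>
      two_sub_mul_sq_norm_sub_le_of_isMinOn hψ hμ hp ht.1 ht.2
  nlinarith [norm_nonneg (z - p), mul_nonneg hμ.le K.coe_nonneg]

end ProxDisplacement

theorem stmt4_general {n : ℕ} (ψ : EuclideanSpace ℝ (Fin n) → ℝ) (η μ L : ℝ)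
    (hη : 0 < η) (hμ : μ ∈ Set.Ioo 0 η⁻¹) (hL : 0 ≤ L)
    (hlip : ∀ x y, |ψ x - ψ y| ≤ L * ‖x - y‖)
    (prox : EuclideanSpace ℝ (Fin n) → EuclideanSpace ℝ (Fin n))
    (hprox : ∀ z, IsMinOn (fun w => ψ w + (1 / (2 * μ)) * ‖w - z‖ ^ 2) Set.univ (prox z)) :
    ∀ z, ‖z - prox z‖ ≤ μ * L / (1 - η * μ) ∧
      ‖μ⁻¹ • (z - prox z)‖ ≤ L / (1 - η * μ) := by
  intro z
  obtain ⟨hμ₀, hμη⟩ := hμ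
  have hψ : LipschitzWith L.toNNReal ψ :=
    LipschitzWith.of_dist_le' fun x y => by simpa [Real.dist_eq, dist_eq_norm] using hlip x y
  have hημ : η * μ < 1 := by simpa [hη.ne'] using mul_lt_mul_of_pos_left hμη hη
  have hpos : 0 < 1 - η * μ := by linarith
  have hle : 1 - η * μ ≤ 1 := by nlinarith
  have hdisp : ‖z - prox z‖ ≤ μ * L := by
    simpa [Real.coe_toNNReal L hL] using norm_sub_le_mul_of_isMinOn hψ hμ₀ (hprox z)
  have hgrad : ‖μ⁻¹ • (z - prox z)‖ ≤ L := by
    rw [norm_smul, Real.norm_of_nonneg (inv_nonneg.mpr hμ₀.le), inv_mul_le_iff₀ hμ₀]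
    exact hdisp
  exact ⟨hdisp.trans (le_div_self (by positivity) hpos hle),
    hgrad.trans (le_div_self hL hpos hle)⟩

/-- ‖z − prox_{μψ}(z)‖ ≤ μL/(1 − ημ), hence ‖∇(μψ)(z)‖ ≤ L/(1 − ημ). -/
theorem stmt4 {n : ℕ} (ψ : EuclideanSpace ℝ (Fin n) → ℝ) (η μ L : ℝ)
    (hη : 0 < η) (hμ : μ ∈ Set.Ioo 0 η⁻¹) (hL : 0 ≤ L)
    (hwc : ConvexOn ℝ Set.univ (fun z => ψ z + (η / 2) * ‖z‖ ^ 2))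
    (hlip : ∀ x y, |ψ x - ψ y| ≤ L * ‖x - y‖)
    (prox : EuclideanSpace ℝ (Fin n) → EuclideanSpace ℝ (Fin n))
    (hprox : ∀ z, IsMinOn (fun w => ψ w + (1 / (2 * μ)) * ‖w - z‖ ^ 2) Set.univ (prox z)) :
    ∀ z, ‖z - prox z‖ ≤ μ * L / (1 - η * μ) ∧
      ‖μ⁻¹ • (z - prox z)‖ ≤ L / (1 - η * μ) :=
  stmt4_general ψ η μ L hη hμ hL hlip prox hprox
end

section
/- Let F_k: ℝᵈ → ℝ be differentiable functions satisfying the descent inequality with constant κ_k = ϖ₁ + ϖ₂/μ_k, and suppose the stepsize γ_k from backtracking satisfies γ_k ≥ min{γ_init, 2ρ(1−c)/κ_k} and the Armijo decrease F_k(x_{k+1}) ≤ F_k(x_k) − cγ_k‖∇F_k(x_k)‖². If additionally there exists D ≥ 0 with F_{k+1}(x_{k+1}) ≤ F_k(x_{k+1}) + D(μ_k − μ_{k+1}) for all k, and inf_k inf_x F_k(x) > −∞, then Σ_{k=1}^∞ μ_k ‖∇F_k(x_k)‖² < ∞ (up to a positive constant factor depending on ϖ₁, ϖ₂, γ_init,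 ρ, c, and sup_k μ_k). -/
open Set Filter

/-- summability lemma for the variable smoothing algorithm:
under the backtracking stepsize lower bound, the Armijo decrease, the envelope shift bound,
and uniform lower boundedness, one has Σ μ_k ‖∇F_k(x_k)‖² < ∞. -/
theorem stmt15 {d : ℕ}
    (F : ℕ → EuclideanSpace ℝ (Fin d) → ℝ)
    (G : ℕ → EuclideanSpace ℝ (Fin d) → EuclideanSpace ℝ (Fin d))
    (x : ℕ → EuclideanSpace ℝ (Fin d)) (γ μ : ℕ → ℝ)
    (ϖ₁ ϖ₂ γinit ρ c M₀ D B : ℝ)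
    (hϖ₁ : 0 < ϖ₁) (hϖ₂ : 0 < ϖ₂) (hγinit : 0 < γinit)
    (hρ : ρ ∈ Set.Ioo (0:ℝ) 1) (hc : c ∈ Set.Ioo (0:ℝ) 1) (hD : 0 ≤ D)
    (hμpos : ∀ k, 0 < μ k) (hμle : ∀ k, μ k ≤ M₀)
    (hμmono : ∀ k, μ (k + 1) ≤ μ k)
    (hμlim : Filter.Tendsto μ Filter.atTop (nhds 0))
    (hupdate : ∀ k, x (k + 1) = x k - γ k • G k (x k))
    (hγ : ∀ k, γ k ≥ min γinit (2 * ρ * (1 - c) / (ϖ₁ + ϖ₂ / μ k)))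
    (hArmijo : ∀ k, F k (x (k + 1)) ≤ F k (x k) - c * γ k * ‖G k (x k)‖ ^ 2)
    (hshift : ∀ k, F (k + 1) (x (k + 1)) ≤ F k (x (k + 1)) + D * (μ k - μ (k + 1)))
    (hbelow : ∀ k y, B ≤ F k y) :
    Summable (fun k => μ k * ‖G k (x k)‖ ^ 2) := by
  have hM₀ : 0 < M₀ := lt_of_lt_of_le (hμpos 0) (hμle 0)
  have hρ0 := hρ.1
  have hc0 := hc.1
  have hc1 : 0 < 1 - c := by linarith [hc.2]
  set β : ℝ := min (γinit / M₀) (2 * ρ * (1 - c) / (ϖ₁ * M₀ + ϖ₂)) with hβdef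
  have hβ : 0 < β := lt_min (by positivity) (by positivity)
  have key : ∀ k, β * μ k ≤ γ k := by
    intro k
    refine le_trans (le_min ?_ ?_) (hγ k)
    · calc β * μ k ≤ (γinit / M₀) * M₀ :=
            mul_le_mul (min_le_left _ _) (hμle k) (hμpos k).le (by positivity)
        _ = γinit := by field_simp
    · have hμk := hμpos k
      have hden : 0 < ϖ₁ + ϖ₂ / μ k := by positivity
      rw [le_div_iff₀ hden]
      have h1 : β * μ k * (ϖ₁ + ϖ₂ / μ k) = β * (ϖ₁ * μ k + ϖ₂) := by
        field_simp
      rw [h1]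
      have h2 : β * (ϖ₁ * μ k + ϖ₂) ≤ β * (ϖ₁ * M₀ + ϖ₂) := by
        apply mul_le_mul_of_nonneg_left _ hβ.le
        nlinarith [hμle k]
      refine h2.trans ?_
      have h3 : β ≤ 2 * ρ * (1 - c) / (ϖ₁ * M₀ + ϖ₂) := min_le_right _ _
      have h4 : 0 < ϖ₁ * M₀ + ϖ₂ := by positivity
      calc β * (ϖ₁ * M₀ + ϖ₂) ≤ (2 * ρ * (1 - c) / (ϖ₁ * M₀ + ϖ₂)) * (ϖ₁ * M₀ + ϖ₂) :=
            mul_le_mul_of_nonneg_right h3 h4.le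
        _ = 2 * ρ * (1 - c) := by field_simp
  have step : ∀ k, c * β * (μ k * ‖G k (x k)‖ ^ 2) ≤
      (F k (x k) + D * μ k) - (F (k + 1) (x (k + 1)) + D * μ (k + 1)) := by
    intro k
    have h1 := hArmijo k
    have h2 := hshift k
    have h3 : c * (β * μ k) * ‖G k (x k)‖ ^ 2 ≤ c * γ k * ‖G k (x k)‖ ^ 2 := by
      apply mul_le_mul_of_nonneg_right _ (sq_nonneg _)
      exact mul_le_mul_of_nonneg_left (key k) hc0.le
    have h4 : c * β * (μ k * ‖G k (x k)‖ ^ 2) = c * (β * μ k) * ‖G k (x k)‖ ^ 2 := by ring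
    linarith
  have hnn : ∀ k, 0 ≤ μ k * ‖G k (x k)‖ ^ 2 :=
    fun k => mul_nonneg (hμpos k).le (sq_nonneg _)
  apply summable_of_sum_range_le (c := (F 0 (x 0) + D * μ 0 - B) / (c * β)) hnn
  intro n
  rw [le_div_iff₀ (by positivity)]
  calc (∑ k ∈ Finset.range n, μ k * ‖G k (x k)‖ ^ 2) * (c * β)
      = ∑ k ∈ Finset.range n, c * β * (μ k * ‖G k (x k)‖ ^ 2) := by
        rw [Finset.sum_mul]; apply Finset.sum_congr rfl; intro k _; ring
    _ ≤ ∑ k ∈ Finset.range n,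
        ((F k (x k) + D * μ k) - (F (k + 1) (x (k + 1)) + D * μ (k + 1))) :=
        Finset.sum_le_sum fun k _ => step k
    _ = (F 0 (x 0) + D * μ 0) - (F n (x n) + D * μ n) :=
        Finset.sum_range_sub' (fun k => F k (x k) + D * μ k) n
    _ ≤ F 0 (x 0) + D * μ 0 - B := by
        have := hbelow n (x n)
        nlinarith [mul_nonneg hD (hμpos n).le]
end
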